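/- Let G be the Gaussian distribution on ℝ^{2N} given by (x, H_N x) with x ∼ N(0, ε·I_N). For subsets S, T ⊆ [N] with |S| = |T| = i, the absolute value of the moment Ĝ(S,T) = E[∏_{i∈S} x_i ∏_{j∈T} y_j] is at most ε^i · i! · N^{-i/2}. -/

import Mathlib

/-!
Expanding `∏_{j ∈ T} y_j = ∏_{j ∈ T} ∑_b H_{jb} x_b` turns the moment into a sum, over all maps
`g : T → [N]`, of `∏_j H_{j,g(j)}` times the Gaussian moment of the monomial
`∏_{a ∈ S} x_a ∏_{j ∈ T} x_{g(j)}`. Odd Gaussian moments vanish, so only monomials with all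
exponents even survive; since `|S| = |T|` this forces `g` to be a bijection `T → S`, and then the
monomial is `∏_{a ∈ S} x_a²`, with moment `ε^|S|`. There are `i!` such bijections and each
coefficient has absolute value `N^{-i/2}`.
-/

open MeasureTheory ProbabilityTheory
open scoped NNReal ENNReal

/-- Entry `(a,b)` of the `N × N` normalized Hadamard matrix, `N = 2^n`. -/
noncomputable def hadamardEntry {n : ℕ} (a b : Fin n → Bool) : ℝ :=
  (-1 : ℝ) ^ (Finset.univ.filter fun t => a t ∧ b t).card / Real.sqrt (2 ^ n)

open Finset Function

namespace ProbabilityTheory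

variable (v : ℝ≥0)

lemma integrable_pow_gaussianReal (μ : ℝ) (k : ℕ) :
    Integrable (fun x : ℝ ↦ x ^ k) (gaussianReal μ v) := by
  simpa using integrable_pow_of_mem_interior_integrableExpSet
    (X := id) (μ := gaussianReal μ v) (by simp [integrableExpSet_id_gaussianReal]) k

lemma integral_pow_gaussianReal_zero_of_odd {k : ℕ} (hk : Odd k) :
    ∫ x, x ^ k ∂gaussianReal 0 v = 0 := by
  have hneg : ∫ x, x ^ k ∂gaussianReal 0 v = ∫ x, (-x) ^ k ∂gaussianReal 0 v := by
    conv_lhs => rw [← neg_zero, ← gaussianReal_map_neg]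
    rw [integral_map (by fun_prop) (by fun_prop)]
  simp only [hk.neg_pow, integral_neg] at hneg
  linarith

lemma integral_sq_gaussianReal_zero : ∫ x, x ^ 2 ∂gaussianReal 0 v = v := by
  rw [← variance_of_integral_eq_zero aemeasurable_id' integral_id_gaussianReal,
    variance_fun_id_gaussianReal]

variable {ι : Type*} [Fintype ι]

lemma integrable_prod_pow_pi_gaussianReal (μ : ℝ) (e : ι → ℕ) :
    Integrable (fun x : ι → ℝ ↦ ∏ b, x b ^ e b) (Measure.pi fun _ ↦ gaussianReal μ v) :=
  Integrable.fintype_prod (f := fun b t ↦ t ^ e b) fun b ↦ integrable_pow_gaussianReal v μ (e b)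

lemma integral_prod_pow_pi_gaussianReal_eq_zero_of_odd (e : ι → ℕ) {b : ι} (hb : Odd (e b)) :
    ∫ x, ∏ b, x b ^ e b ∂(Measure.pi fun _ ↦ gaussianReal 0 v) = 0 := by
  rw [integral_fintype_prod_eq_prod (fun b t ↦ t ^ e b)]
  exact prod_eq_zero (mem_univ b) (integral_pow_gaussianReal_zero_of_odd v hb)

lemma integral_prod_sq_pi_gaussianReal [DecidableEq ι] (S : Finset ι) :
    ∫ x, ∏ a ∈ S, x a ^ 2 ∂(Measure.pi fun _ ↦ gaussianReal 0 v) = v ^ #S := by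
  have hS (x : ι → ℝ) : ∏ a ∈ S, x a ^ 2 = ∏ b, if b ∈ S then x b ^ 2 else 1 := by
    rw [prod_ite_mem, univ_inter]
  have hfactor (b : ι) : ∫ t, (if b ∈ S then t ^ 2 else 1) ∂gaussianReal 0 v
      = if b ∈ S then (v : ℝ) else 1 := by
    split_ifs <;> simp [integral_sq_gaussianReal_zero]
  simp_rw [hS]
  rw [integral_fintype_prod_eq_prod (fun b t ↦ if b ∈ S then t ^ 2 else 1)]
  simp_rw [hfactor]
  rw [prod_ite_mem, univ_inter, prod_const]

end ProbabilityTheory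

section Monomial

variable {V κ : Type*} [Fintype κ]

def monomialExponent [DecidableEq V] (S : Finset V) (g : κ → V) (b : V) : ℕ :=
  (if b ∈ S then 1 else 0) + #{j | g j = b}

lemma prod_mul_prod_comp_eq_prod_pow_monomialExponent [Fintype V] [DecidableEq V]
    {R : Type*} [CommMonoid R] (S : Finset V) (g : κ → V) (x : V → R) :
    (∏ a ∈ S, x a) * ∏ j, x (g j) = ∏ b, x b ^ monomialExponent S g b := by
  have hS : ∏ a ∈ S, x a = ∏ b, x b ^ (if b ∈ S then 1 else 0) := by
    simp [pow_ite, prod_ite_mem]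
  have hg : ∏ j, x (g j) = ∏ b, x b ^ #{j | g j = b} := by
    rw [← prod_fiberwise' univ g]
    simp
  simp only [hS, hg, monomialExponent, pow_add, prod_mul_distrib]

lemma injective_and_mem_of_even_monomialExponent [DecidableEq V] {S : Finset V} {g : κ → V}
    (hκ : Fintype.card κ ≤ #S) (heven : ∀ b ∈ S, Even (monomialExponent S g b)) :
    Injective g ∧ ∀ j, g j ∈ S := by
  have hsub : S ⊆ univ.image g := by
    intro b hb
    have hfiber : #{j | g j = b} ≠ 0 := by
      intro h0
      simpa [monomialExponent, hb, h0] using heven b hb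
    obtain ⟨j, hj⟩ := card_ne_zero.1 hfiber
    exact mem_image.2 ⟨j, mem_univ j, (mem_filter.1 hj).2⟩
  have hcard : #(univ.image g) ≤ #S := card_image_le.trans (by simpa using hκ)
  have himage : S = univ.image g := eq_of_subset_of_card_le hsub hcard
  refine ⟨?_, fun j ↦ himage ▸ mem_image_of_mem g (mem_univ j)⟩
  have hinj : Set.InjOn g (univ : Finset κ) :=
    card_image_iff.1 (le_antisymm card_image_le (by simpa [← himage] using hκ))
  simpa using hinj

lemma prod_comp_eq_prod_of_injective [DecidableEq V] {R : Type*} [CommMonoid R]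
    {S : Finset V} {g : κ → V} (hκ : Fintype.card κ = #S) (hinj : Injective g)
    (hmem : ∀ j, g j ∈ S) (x : V → R) :
    ∏ j, x (g j) = ∏ a ∈ S, x a := by
  have himage : univ.image g = S :=
    eq_of_subset_of_card_le (fun b hb ↦ by obtain ⟨j, -, rfl⟩ := mem_image.1 hb; exact hmem j)
      (by rw [card_image_of_injective _ hinj, card_univ, hκ])
  rw [← himage, prod_image fun j _ j' _ h ↦ hinj h]

lemma card_filter_injective_mem_le [Fintype V] [DecidableEq V] [DecidableEq κ] (S : Finset V) :
    #{g : κ → V | Injective g ∧ ∀ j, g j ∈ S} ≤ (#S).descFactorial (Fintype.card κ) := by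
  have hsurj : Set.SurjOn (fun φ : κ ↪ S ↦ fun j ↦ (φ j : V)) (univ : Finset (κ ↪ S))
      ({g : κ → V | Injective g ∧ ∀ j, g j ∈ S} : Finset (κ → V)) := by
    intro g hg
    obtain ⟨hinj, hmem⟩ := (mem_filter.1 hg).2
    exact ⟨⟨fun j ↦ ⟨g j, hmem j⟩, fun j j' h ↦ hinj (congrArg Subtype.val h)⟩, mem_univ _, rfl⟩
  simpa [Fintype.card_embedding_eq] using card_le_card_of_surjOn _ hsurj

lemma prod_mul_prod_sum_eq_sum [Fintype V] [DecidableEq κ] {R : Type*} [CommSemiring R]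
    (S : Finset V) (c : κ → V → R) (x : V → R) :
    (∏ a ∈ S, x a) * ∏ j, ∑ b, c j b * x b
      = ∑ g : κ → V, (∏ j, c j (g j)) * ((∏ a ∈ S, x a) * ∏ j, x (g j)) := by
  rw [prod_univ_sum, Fintype.piFinset_univ, mul_sum]
  refine sum_congr rfl fun g _ ↦ ?_
  rw [prod_mul_distrib]
  ring

end Monomial

section GaussianMoments

variable {V κ : Type*} [Fintype V] [DecidableEq V] [Fintype κ] (v : ℝ≥0)

lemma integral_prod_mul_prod_comp_pi_gaussianReal {S : Finset V} (hκ : Fintype.card κ = #S)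
    (g : κ → V) :
    ∫ x, (∏ a ∈ S, x a) * ∏ j, x (g j) ∂(Measure.pi fun _ ↦ gaussianReal 0 v)
      = if Injective g ∧ ∀ j, g j ∈ S then (v : ℝ) ^ #S else 0 := by
  split_ifs with hg
  · simp_rw [prod_comp_eq_prod_of_injective hκ hg.1 hg.2, ← prod_mul_distrib, ← sq]
    exact integral_prod_sq_pi_gaussianReal v S
  · obtain ⟨b, hb⟩ : ∃ b, Odd (monomialExponent S g b) := by
      by_contra! h
      exact hg (injective_and_mem_of_even_monomialExponent hκ.le
        fun b _ ↦ Nat.not_odd_iff_even.1 (h b))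
    simp_rw [prod_mul_prod_comp_eq_prod_pow_monomialExponent]
    exact integral_prod_pow_pi_gaussianReal_eq_zero_of_odd v _ hb

lemma integral_prod_mul_prod_sum_pi_gaussianReal [DecidableEq κ] {S : Finset V}
    (hκ : Fintype.card κ = #S) (c : κ → V → ℝ) :
    ∫ x, (∏ a ∈ S, x a) * ∏ j, ∑ b, c j b * x b ∂(Measure.pi fun _ ↦ gaussianReal 0 v)
      = ∑ g : κ → V, (∏ j, c j (g j)) *
          if Injective g ∧ ∀ j, g j ∈ S then (v : ℝ) ^ #S else 0 := by
  have hint (g : κ → V) : Integrable (fun x : V → ℝ ↦ (∏ j, c j (g j)) *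
      ((∏ a ∈ S, x a) * ∏ j, x (g j))) (Measure.pi fun _ ↦ gaussianReal 0 v) := by
    simp_rw [prod_mul_prod_comp_eq_prod_pow_monomialExponent]
    exact (integrable_prod_pow_pi_gaussianReal v 0 _).const_mul _
  simp_rw [prod_mul_prod_sum_eq_sum]
  rw [integral_finsetSum _ fun g _ ↦ hint g]
  simp_rw [integral_const_mul, integral_prod_mul_prod_comp_pi_gaussianReal v hκ]

theorem abs_integral_prod_mul_prod_sum_pi_gaussianReal_le [DecidableEq κ] {S : Finset V}
    (hκ : Fintype.card κ = #S) (c : κ → V → ℝ) {K : ℝ} (hK : 0 ≤ K) (hc : ∀ j b, |c j b| ≤ K) :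
    |∫ x, (∏ a ∈ S, x a) * ∏ j, ∑ b, c j b * x b ∂(Measure.pi fun _ ↦ gaussianReal 0 v)|
      ≤ (v : ℝ) ^ #S * (#S).factorial * K ^ #S := by
  have hcoeff (g : κ → V) : |∏ j, c j (g j)| ≤ K ^ #S := by
    rw [abs_prod, ← hκ, ← card_univ, ← prod_const]
    exact prod_le_prod (fun _ _ ↦ abs_nonneg _) fun j _ ↦ hc j (g j)
  have hcount : (#{g : κ → V | Injective g ∧ ∀ j, g j ∈ S} : ℝ) ≤ (#S).factorial := by
    exact_mod_cast (card_filter_injective_mem_le S).trans_eq (by rw [hκ, Nat.descFactorial_self])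
  rw [integral_prod_mul_prod_sum_pi_gaussianReal v hκ]
  calc _ ≤ ∑ g : κ → V, K ^ #S * if Injective g ∧ ∀ j, g j ∈ S then (v : ℝ) ^ #S else 0 := by
        refine (abs_sum_le_sum_abs _ _).trans (sum_le_sum fun g _ ↦ ?_)
        have hmoment : 0 ≤ if Injective g ∧ ∀ j, g j ∈ S then (v : ℝ) ^ #S else 0 := by
          split_ifs <;> positivity
        rw [abs_mul, abs_of_nonneg hmoment]
        exact mul_le_mul_of_nonneg_right (hcoeff g) hmoment
    _ = K ^ #S * (#{g : κ → V | Injective g ∧ ∀ j, g j ∈ S} * (v : ℝ) ^ #S) := by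
        rw [← mul_sum, sum_ite, sum_const_zero, add_zero, sum_const, nsmul_eq_mul]
    _ ≤ K ^ #S * ((#S).factorial * (v : ℝ) ^ #S) := by gcongr
    _ = _ := by ring

end GaussianMoments

lemma abs_hadamardEntry {n : ℕ} (a b : Fin n → Bool) :
    |hadamardEntry a b| = (Real.sqrt (2 ^ n))⁻¹ := by
  simp [hadamardEntry, abs_div]

/-- For the Gaussian distribution `G` of `(x, H_N x)` with
`x ∼ N(0, ε·I_N)`, and subsets `S, T ⊆ [N]` with `|S| = |T| = i`, the moment
`Ĝ(S,T) = E[∏_{i∈S} x_i ∏_{j∈T} y_j]` satisfies `|Ĝ(S,T)| ≤ ε^i · i! · N^{-i/2}`. -/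
theorem gaussian_forrelation_moment_bound
    {n : ℕ} (ε : ℝ≥0) (i : ℕ) (S T : Finset (Fin n → Bool))
    (hS : S.card = i) (hT : T.card = i) :
    |∫ x, (∏ a ∈ S, x a) *
        ∏ j ∈ T, (∑ b : Fin n → Bool, hadamardEntry j b * x b)
        ∂(Measure.pi fun _ : Fin n → Bool => gaussianReal 0 ε)|
      ≤ (ε : ℝ) ^ i * (i.factorial : ℝ) / Real.sqrt (2 ^ n) ^ i := by
  have hκ : Fintype.card T = #S := by rw [Fintype.card_coe, hS, hT]
  have hbound := abs_integral_prod_mul_prod_sum_pi_gaussianReal_le ε hκ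
    (fun j b ↦ hadamardEntry j.1 b) (by positivity) fun j b ↦ (abs_hadamardEntry j.1 b).le
  have hprod (x : (Fin n → Bool) → ℝ) : ∏ j ∈ T, ∑ b, hadamardEntry j b * x b
      = ∏ j : T, ∑ b, hadamardEntry j b * x b := (prod_coe_sort T _).symm
  simp_rw [hprod]
  rwa [hS, inv_pow, ← div_eq_mul_inv] at hbound
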